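/- Model I (y_i = β_0 + ε_i with ε_i ~ N(0, σ_y²)) and Model II (y_i = β_0 + ω_i + ε_i' with ω_i ~ N(0, σ_ω²), ε_i' ~ N(0, σ_ε²), all independent, and σ_ε² + σ_ω² = σ_y²) yield the same posterior predictive distribution for a new observation y' given data y_1,...,y_N: both are Gaussian with mean μ_{β_0} = (Nȳ/σ_y²)/(N/σ_y² + 1/σ_0²) and variance 1/(N/σ_y² + 1/σ_0²) + σ_y², under the prior β_0 ~ N(0, σ_0²). -/
import Mathlib


open MeasureTheory ProbabilityTheory Finset

section Aux
open Real

lemma gauss_symm (m v x : ℝ) :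
    gaussianPDFReal m v.toNNReal x = gaussianPDFReal x v.toNNReal m := by
  simp only [gaussianPDFReal]
  ring_nf

lemma gauss_prod {v1 v2 : ℝ} (h1 : 0 < v1) (h2 : 0 < v2) (m1 m2 x : ℝ) :
    gaussianPDFReal m1 v1.toNNReal x * gaussianPDFReal m2 v2.toNNReal x
      = gaussianPDFReal m2 (v1 + v2).toNNReal m1
        * gaussianPDFReal ((m1 * v2 + m2 * v1) / (v1 + v2)) (v1 * v2 / (v1 + v2)).toNNReal x := by
  have h12 : 0 < v1 + v2 := by linarith
  simp only [gaussianPDFReal, Real.coe_toNNReal _ h1.le, Real.coe_toNNReal _ h2.le,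
    Real.coe_toNNReal _ h12.le, Real.coe_toNNReal _ (by positivity : (0:ℝ) ≤ v1 * v2 / (v1 + v2))]
  rw [mul_mul_mul_comm]
  conv_rhs => rw [mul_mul_mul_comm]
  rw [← Real.exp_add, ← Real.exp_add, ← mul_inv, ← mul_inv,
    ← Real.sqrt_mul (by positivity), ← Real.sqrt_mul (by positivity)]
  congr 2
  · field_simp
  · field_simp
    ring

lemma gauss_conv {v1 v2 : ℝ} (h1 : 0 < v1) (h2 : 0 < v2) (m1 m2 : ℝ) :
    ∫ x : ℝ, gaussianPDFReal m1 v1.toNNReal x * gaussianPDFReal m2 v2.toNNReal x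
      = gaussianPDFReal m2 (v1 + v2).toNNReal m1 := by
  have h12 : 0 < v1 * v2 / (v1 + v2) := by positivity
  calc ∫ x : ℝ, gaussianPDFReal m1 v1.toNNReal x * gaussianPDFReal m2 v2.toNNReal x
      = ∫ x : ℝ, gaussianPDFReal m2 (v1 + v2).toNNReal m1
          * gaussianPDFReal ((m1 * v2 + m2 * v1) / (v1 + v2)) (v1 * v2 / (v1 + v2)).toNNReal x := by
        congr 1; funext x; exact gauss_prod h1 h2 m1 m2 x
    _ = gaussianPDFReal m2 (v1 + v2).toNNReal m1 := by
        rw [integral_const_mul,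
          integral_gaussianPDFReal_eq_one _ ((Real.toNNReal_pos.2 h12).ne'), mul_one]

lemma gauss_shift (a v x : ℝ) :
    (fun ω : ℝ => gaussianPDFReal (a + ω) v.toNNReal x)
      = fun ω => gaussianPDFReal (x - a) v.toNNReal ω := by
  funext ω; simp only [gaussianPDFReal]; ring_nf

lemma inner_int {σε2 σω2 : ℝ} (hσε : 0 < σε2) (hσω : 0 < σω2) (a x : ℝ) :
    ∫ ω : ℝ, gaussianPDFReal (a + ω) σε2.toNNReal x * gaussianPDFReal 0 σω2.toNNReal ω
      = gaussianPDFReal a (σε2 + σω2).toNNReal x := by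
  have h1 : ∀ ω : ℝ, gaussianPDFReal (a + ω) σε2.toNNReal x
      = gaussianPDFReal (x - a) σε2.toNNReal ω := fun ω => congrFun (gauss_shift a σε2 x) ω
  simp_rw [h1]
  rw [gauss_conv hσε hσω (x - a) 0]
  simp only [gaussianPDFReal]
  ring_nf

lemma posterior_prod (N : ℕ) (y : Fin N → ℝ) {σy2 σ02 : ℝ}
    (hσy : 0 < σy2) (hσ0 : 0 < σ02) :
    ∃ K > (0:ℝ), ∀ β0 : ℝ,
      (∏ i, gaussianPDFReal β0 σy2.toNNReal (y i)) * gaussianPDFReal 0 σ02.toNNReal β0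
        = K * gaussianPDFReal ((∑ i, y i) / σy2 * ((N:ℝ)/σy2 + 1/σ02)⁻¹)
            ((N:ℝ)/σy2 + 1/σ02)⁻¹.toNNReal β0 := by
  set S : ℝ := ∑ i, y i with hS
  set Q : ℝ := ∑ i, (y i)^2 with hQ
  have hD : 0 < (N:ℝ)/σy2 + 1/σ02 := by positivity
  set D : ℝ := (N:ℝ)/σy2 + 1/σ02 with hDdef
  set τ : ℝ := D⁻¹ with hτ
  have hτpos : 0 < τ := inv_pos.2 hD
  set μp : ℝ := S / σy2 * D⁻¹ with hμp
  refine ⟨((√(2*Real.pi*σy2))⁻¹)^N * (√(2*Real.pi*σ02))⁻¹ * √(2*Real.pi*τ)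
      * Real.exp (μp^2/(2*τ) - Q/(2*σy2)), by positivity, fun β0 => ?_⟩
  simp only [gaussianPDFReal, Real.coe_toNNReal _ hσy.le, Real.coe_toNNReal _ hσ0.le,
    Real.coe_toNNReal _ hτpos.le]
  rw [Finset.prod_mul_distrib, Finset.prod_const, Finset.card_univ, Fintype.card_fin,
    ← Real.exp_sum]
  simp only [sub_zero]
  have hsum : ∑ i, -(y i - β0)^2/(2*σy2) = (-Q + 2*S*β0 - (N:ℝ)*β0^2)/(2*σy2) := by
    rw [← Finset.sum_div]
    congr 1
    have : ∀ i : Fin N, -(y i - β0)^2 = -(y i)^2 + 2*β0*(y i) - β0^2 := fun i => by ring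
    rw [Finset.sum_congr rfl (fun i _ => this i)]
    rw [Finset.sum_sub_distrib, Finset.sum_add_distrib, ← Finset.mul_sum, Finset.sum_const,
      Finset.card_univ, Fintype.card_fin]
    simp [hS, hQ]
    ring
  have hexp : (-Q + 2*S*β0 - (N:ℝ)*β0^2)/(2*σy2) + -β0^2/(2*σ02)
      = (μp^2/(2*τ) - Q/(2*σy2)) + -(β0 - μp)^2/(2*τ) := by
    rw [hμp, hτ, hDdef]
    field_simp
    ring
  calc ((√(2*Real.pi*σy2))⁻¹)^N * Real.exp (∑ i, -(y i - β0)^2/(2*σy2))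
        * ((√(2*Real.pi*σ02))⁻¹ * Real.exp (-β0^2/(2*σ02)))
      = ((√(2*Real.pi*σy2))⁻¹)^N * (√(2*Real.pi*σ02))⁻¹
          * Real.exp ((∑ i, -(y i - β0)^2/(2*σy2)) + -β0^2/(2*σ02)) := by
        rw [Real.exp_add]; ring
    _ = _ := by
        rw [hsum, hexp, Real.exp_add]
        have : √(2*Real.pi*τ) * (√(2*Real.pi*τ))⁻¹ = 1 :=
          mul_inv_cancel₀ (by positivity)
        field_simp

end Aux
/-- Model I (`y_i = β₀ + ε_i`, `ε_i ~ N(0, σ_y²)`) and Model II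
(`y_i = β₀ + ω_i + ε_i'`, `ω_i ~ N(0, σ_ω²)`, `ε_i' ~ N(0, σ_ε²)`, all
independent, `σ_ε² + σ_ω² = σ_y²`), with prior `β₀ ~ N(0, σ₀²)`, yield the same
posterior predictive distribution for a new observation `y'`: both predictive
densities are proportional to (hence, normalized, equal to) the Gaussian
density with mean `μ_{β₀} = (Nȳ/σ_y²)/(N/σ_y² + 1/σ₀²)` and variance
`1/(N/σ_y² + 1/σ₀²) + σ_y²`.  In Model II the predictive integrates over the
new random effect `ω'` (through `μ' = β₀ + ω'`) and over each `ω_i`. -/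
theorem posterior_predictive_modelI_eq_modelII (N : ℕ) (hN : 1 ≤ N)
    (y : Fin N → ℝ) (σy2 σε2 σω2 σ02 : ℝ)
    (hσy : 0 < σy2) (hσε : 0 < σε2) (hσω : 0 < σω2) (hσ0 : 0 < σ02)
    (hsum : σε2 + σω2 = σy2) :
    ∃ cI > (0 : ℝ), ∃ cII > (0 : ℝ), ∀ y' : ℝ,
      (∫ β0 : ℝ, gaussianPDFReal β0 σy2.toNNReal y'
            * (∏ i, gaussianPDFReal β0 σy2.toNNReal (y i))
            * gaussianPDFReal 0 σ02.toNNReal β0)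
        = cI * gaussianPDFReal
            ((N * ((∑ i, y i) / N) / σy2) / (N / σy2 + 1 / σ02))
            (1 / (N / σy2 + 1 / σ02) + σy2).toNNReal y' ∧
      (∫ β0 : ℝ,
            (∫ ω' : ℝ, gaussianPDFReal (β0 + ω') σε2.toNNReal y'
              * gaussianPDFReal 0 σω2.toNNReal ω')
            * (∏ i, ∫ ωi : ℝ, gaussianPDFReal (β0 + ωi) σε2.toNNReal (y i)
              * gaussianPDFReal 0 σω2.toNNReal ωi)
            * gaussianPDFReal 0 σ02.toNNReal β0)
        = cII * gaussianPDFReal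
            ((N * ((∑ i, y i) / N) / σy2) / (N / σy2 + 1 / σ02))
            (1 / (N / σy2 + 1 / σ02) + σy2).toNNReal y' := by
  obtain ⟨K, hKpos, hK⟩ := posterior_prod N y hσy hσ0
  have hD : 0 < (N:ℝ)/σy2 + 1/σ02 := by positivity
  have hτpos : 0 < ((N:ℝ)/σy2 + 1/σ02)⁻¹ := inv_pos.2 hD
  have hN0 : (N:ℝ) ≠ 0 := Nat.cast_ne_zero.2 (by omega)
  set μp : ℝ := (∑ i, y i) / σy2 * ((N:ℝ)/σy2 + 1/σ02)⁻¹ with hμp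
  have hmean : ((N:ℝ) * ((∑ i, y i) / N) / σy2) / ((N:ℝ) / σy2 + 1 / σ02) = μp := by
    rw [hμp, mul_div_cancel₀ _ hN0, div_eq_mul_inv]
  have hvar : 1 / ((N:ℝ) / σy2 + 1 / σ02) + σy2 = σy2 + ((N:ℝ)/σy2 + 1/σ02)⁻¹ := by
    rw [one_div]; ring
  have hI : ∀ y' : ℝ,
      (∫ β0 : ℝ, gaussianPDFReal β0 σy2.toNNReal y'
            * (∏ i, gaussianPDFReal β0 σy2.toNNReal (y i))
            * gaussianPDFReal 0 σ02.toNNReal β0)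
        = K * gaussianPDFReal μp (σy2 + ((N:ℝ)/σy2 + 1/σ02)⁻¹).toNNReal y' := by
    intro y'
    calc (∫ β0 : ℝ, gaussianPDFReal β0 σy2.toNNReal y'
            * (∏ i, gaussianPDFReal β0 σy2.toNNReal (y i))
            * gaussianPDFReal 0 σ02.toNNReal β0)
        = ∫ β0 : ℝ, K * (gaussianPDFReal y' σy2.toNNReal β0
            * gaussianPDFReal μp ((N:ℝ)/σy2 + 1/σ02)⁻¹.toNNReal β0) := by
          congr 1; funext β0
          rw [mul_assoc, hK β0, gauss_symm β0 σy2 y']; ring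
      _ = K * ∫ β0 : ℝ, gaussianPDFReal y' σy2.toNNReal β0
            * gaussianPDFReal μp ((N:ℝ)/σy2 + 1/σ02)⁻¹.toNNReal β0 := integral_const_mul _ _
      _ = K * gaussianPDFReal μp (σy2 + ((N:ℝ)/σy2 + 1/σ02)⁻¹).toNNReal y' := by
          rw [gauss_conv hσy hτpos y' μp, gauss_symm]
  refine ⟨K, hKpos, K, hKpos, fun y' => ⟨?_, ?_⟩⟩
  · rw [hmean, hvar]; exact hI y'
  · rw [hmean, hvar]
    calc (∫ β0 : ℝ,
            (∫ ω' : ℝ, gaussianPDFReal (β0 + ω') σε2.toNNReal y'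
              * gaussianPDFReal 0 σω2.toNNReal ω')
            * (∏ i, ∫ ωi : ℝ, gaussianPDFReal (β0 + ωi) σε2.toNNReal (y i)
              * gaussianPDFReal 0 σω2.toNNReal ωi)
            * gaussianPDFReal 0 σ02.toNNReal β0)
        = ∫ β0 : ℝ, gaussianPDFReal β0 σy2.toNNReal y'
            * (∏ i, gaussianPDFReal β0 σy2.toNNReal (y i))
            * gaussianPDFReal 0 σ02.toNNReal β0 := by
          congr 1; funext β0
          rw [inner_int hσε hσω β0 y', hsum]
          congr 2
          exact Finset.prod_congr rfl fun i _ => by rw [inner_int hσε hσω β0 (y i), hsum]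
      _ = K * gaussianPDFReal μp (σy2 + ((N:ℝ)/σy2 + 1/σ02)⁻¹).toNNReal y' := hI y'
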